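/- (Theorem 1, equation (9)) Let Y^(0), Y^(1), ..., Y^(K) be i.i.d. random trajectories, each a random element of (ℝ^d)^{T+1}, writing Y^(i) = (Y^(i)_0,...,Y^(i)_T). For each t ∈ {0,...,T−1} let h_t : (ℝ^d)^{t+1} → ℝ^d be a measurable predictor and set ŷ^(i)_{t+1|t} := h_t(Y^(i)_0,...,Y^(i)_t). Let δ ∈ (0,1), δ̄ := δ/T, p := ⌈(K+1)(1−δ̄)⌉, and for each t define R^(i)_{t+1|t} := ‖Y^(i)_{t+1} − ŷ^(i)_{t+1|t}‖ for i = 1,...,K and let C_{t+1|t} be the p-th smallest element of the list (R^(1)_{t+1|t},...,R^(K)_{t+1|t},+∞). Then P(‖Y^(0)_{t+1} − ŷ^(0)_{t+1|t}‖ ≤ C_{t+1|t} for all t ∈ {0,...,T−1}) ≥ 1 − δ. -/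

import Mathlib

/-!
Fix a step `t`. The nonconformity scores of the `K + 1` trajectories are i.i.d., hence
exchangeable, so the events "fewer than `p` scores lie strictly below score `i`" all have the
same probability. Every outcome lies in at least `p` of these `K + 1` events (an index outside
them with minimal score would have only members below it), so each has probability at least
`p / (K + 1) ≥ 1 - δ / T`. On the event for the test trajectory its score is at most the `p`-th
smallest of the validation scores and `+∞`, and a union bound over the `T` steps gives `1 - δ`.
-/

open MeasureTheory ProbabilityTheory Finset
open scoped ENNReal

noncomputable def conformalBound (K : ℕ) (R : Fin K → EReal) (p : ℕ) : EReal :=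
  (@List.insertionSort EReal (· ≤ ·) (Classical.decRel _)
    (((List.finRange K).map R) ++ [⊤])).getD (p - 1) ⊤

section StrictRank

variable {ι α : Type*} [Fintype ι] [LinearOrder α]

def strictRank (S : ι → α) (i : ι) : ℕ := #{j | S j < S i}

lemma strictRank_comp_perm (S : ι → α) (e : Equiv.Perm ι) (i : ι) :
    strictRank (S ∘ e) i = strictRank S (e i) :=
  card_equiv e (by simp)

lemma le_card_strictRank_lt (S : ι → α) {p : ℕ} (hp : p ≤ Fintype.card ι) :
    p ≤ #{i | strictRank S i < p} := by
  classical
  set T : Finset ι := {i | strictRank S i < p}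
  by_contra! hT
  have hTc : Tᶜ.Nonempty := by
    rw [← card_pos, card_compl]; omega
  obtain ⟨i, hiT, hmin⟩ := Tᶜ.exists_min_image S hTc
  have hsub : ({j | S j < S i} : Finset ι) ⊆ T := fun j hj => by
    by_contra hjT
    exact (mem_filter.1 hj).2.not_ge (hmin j (mem_compl.2 hjT))
  exact mem_compl.1 hiT (mem_filter.2 ⟨mem_univ _, (card_le_card hsub).trans_lt hT⟩)

lemma measurable_strictRank [TopologicalSpace α] [OrderClosedTopology α]
    [SecondCountableTopology α] [MeasurableSpace α] [OpensMeasurableSpace α] (i : ι) :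
    Measurable fun v : ι → α => strictRank v i := by
  simp only [strictRank, card_filter]
  exact Finset.measurable_sum _ fun j _ => Measurable.ite
    (measurableSet_lt (measurable_pi_apply j) (measurable_pi_apply i)) measurable_const
    measurable_const

end StrictRank

lemma List.SortedLE.le_countP_lt {α : Type*} [LinearOrder α] {l : List α} (hl : l.SortedLE)
    {q : ℕ} (hq : q < l.length) {x : α} (hx : l[q] < x) :
    q + 1 ≤ l.countP (· < x) := by
  have htake : ∀ y ∈ l.take (q + 1), y < x := by
    intro y hy
    obtain ⟨k, hk, rfl⟩ := List.mem_take_iff_getElem.1 hy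
    exact lt_of_le_of_lt
      (hl.monotone_get (Fin.mk_le_mk.2 (by omega) : (⟨k, by omega⟩ : Fin _) ≤ ⟨q, hq⟩)) hx
  calc q + 1 = (l.take (q + 1)).countP (· < x) := by
        rw [List.countP_eq_length.2 (by simpa using htake), List.length_take]; omega
    _ ≤ l.countP (· < x) := (List.take_sublist _ _).countP_le

lemma countP_map_finRange {α : Type*} (K : ℕ) (R : Fin K → α) (P : α → Prop)
    [DecidablePred P] :
    ((List.finRange K).map R).countP (P ·) = #{i | P (R i)} := by
  rw [List.countP_map, List.countP_eq_length_filter]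
  -- `Finset.univ : Finset (Fin K)` is built from `List.finRange K`
  rfl

lemma le_conformalBound_of_card_lt {K p : ℕ} {R : Fin K → EReal} {x : EReal}
    (hx : #{i | R i < x} < p) : x ≤ conformalBound K R p := by
  set L := ((List.finRange K).map R) ++ [⊤]
  set M := @List.insertionSort EReal (· ≤ ·) (Classical.decRel _) L
  rcases le_or_gt M.length (p - 1) with hlen | hlen
  · rw [conformalBound, List.getD_eq_default _ _ hlen]
    exact le_top
  rw [conformalBound, List.getD_eq_getElem _ _ hlen]
  by_contra! hlt
  have hsorted : M.SortedLE :=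
    (@List.pairwise_insertionSort EReal (· ≤ ·) (Classical.decRel _) _ _ L).sortedLE
  have hcount : M.countP (· < x) = #{i | R i < x} := by
    rw [(@List.perm_insertionSort EReal (· ≤ ·) (Classical.decRel _) L).countP_eq,
      List.countP_append, countP_map_finRange]
    simp
  have := hsorted.le_countP_lt hlen hlt
  omega

lemma le_conformalBound_of_strictRank_zero_lt {K p : ℕ} {S : Fin (K + 1) → EReal}
    (hS : strictRank S 0 < p) : S 0 ≤ conformalBound K (fun i => S i.succ) p := by
  refine le_conformalBound_of_card_lt (lt_of_eq_of_lt ?_ hS)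
  simp only [strictRank, card_filter, Fin.sum_univ_succ, lt_self_iff_false, if_false, zero_add]

section Probability

variable {ι α Ω : Type*} [Fintype ι] [MeasurableSpace Ω] {μ : Measure Ω}

lemma ProbabilityTheory.iIndepFun.map_comp_perm [MeasurableSpace α] {W : ι → Ω → α}
    (hW : ∀ i, Measurable (W i)) (hind : iIndepFun W μ) {ν : Measure α}
    (hν : ∀ i, μ.map (W i) = ν) (e : Equiv.Perm ι) :
    μ.map (fun ω j => W (e j) ω) = μ.map (fun ω j => W j ω) := by
  rw [(hind.precomp e.injective).map_fun_eq_pi_map fun j => (hW _).aemeasurable,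
    hind.map_fun_eq_pi_map fun j => (hW j).aemeasurable]
  simp only [hν]

lemma natCast_le_sum_measure_of_le_card [IsProbabilityMeasure μ] {E : ι → Set Ω}
    [∀ ω, DecidablePred fun i => ω ∈ E i] (hE : ∀ i, MeasurableSet (E i)) {p : ℕ}
    (hp : ∀ ω, p ≤ #{i | ω ∈ E i}) :
    (p : ℝ≥0∞) ≤ ∑ i, μ (E i) := by
  calc (p : ℝ≥0∞) = ∫⁻ _, (p : ℝ≥0∞) ∂μ := by simp
    _ ≤ ∫⁻ ω, ∑ i, (E i).indicator 1 ω ∂μ := lintegral_mono fun ω => by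
        simpa [Set.indicator_apply] using hp ω
    _ = ∑ i, μ (E i) := by
        rw [lintegral_finsetSum _ fun i _ => measurable_one.indicator (hE i)]
        simp only [lintegral_indicator_one (hE _)]

theorem natCast_le_card_mul_measureReal_strictRank_lt [IsProbabilityMeasure μ] [LinearOrder α]
    [TopologicalSpace α] [OrderClosedTopology α] [SecondCountableTopology α]
    [MeasurableSpace α] [OpensMeasurableSpace α] {W : ι → Ω → α}
    (hW : ∀ i, Measurable (W i)) (hind : iIndepFun W μ) {ν : Measure α}
    (hν : ∀ i, μ.map (W i) = ν) {p : ℕ} (hp : p ≤ Fintype.card ι) (i₀ : ι) :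
    (p : ℝ) ≤ Fintype.card ι * μ.real {ω | strictRank (W · ω) i₀ < p} := by
  classical
  set E : ι → Set Ω := fun i => {ω | strictRank (W · ω) i < p}
  have hV : Measurable fun ω j => W j ω := measurable_pi_lambda _ hW
  have hG : MeasurableSet {v : ι → α | strictRank v i₀ < p} :=
    measurable_strictRank i₀ measurableSet_Iio
  have hE : ∀ i, MeasurableSet (E i) := fun i => hV (measurable_strictRank i measurableSet_Iio)
  have hexch : ∀ i, μ (E i) = μ (E i₀) := fun i => by
    have hEi : E i = (fun ω j => W (Equiv.swap i₀ i j) ω) ⁻¹' {v | strictRank v i₀ < p} := by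
      ext ω
      change _ ↔ strictRank ((W · ω) ∘ Equiv.swap i₀ i) i₀ < p
      rw [strictRank_comp_perm, Equiv.swap_apply_left]
      exact Iff.rfl
    rw [hEi, ← Measure.map_apply (measurable_pi_lambda _ fun j => hW _) hG,
      hind.map_comp_perm hW hν, Measure.map_apply hV hG]
    rfl
  have hsum : (p : ℝ≥0∞) ≤ Fintype.card ι * μ (E i₀) :=
    calc (p : ℝ≥0∞) ≤ ∑ i, μ (E i) :=
          natCast_le_sum_measure_of_le_card hE fun ω => le_card_strictRank_lt _ hp
      _ = Fintype.card ι * μ (E i₀) := by simp [hexch]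
  simpa [measureReal_def] using ENNReal.toReal_mono (by simp [ENNReal.mul_eq_top]) hsum

lemma one_sub_card_mul_le_measureReal_iInter [IsProbabilityMeasure μ] {A : ι → Set Ω}
    (hA : ∀ i, MeasurableSet (A i)) {ε : ℝ} (h : ∀ i, 1 - ε ≤ μ.real (A i)) :
    1 - Fintype.card ι * ε ≤ μ.real (⋂ i, A i) := by
  have hunion : μ.real (⋂ i, A i)ᶜ ≤ Fintype.card ι * ε := by
    rw [Set.compl_iInter]
    calc μ.real (⋃ i, (A i)ᶜ) ≤ ∑ i, μ.real (A i)ᶜ := measureReal_iUnion_fintype_le _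
      _ ≤ ∑ _i : ι, ε := sum_le_sum fun i _ => by
          rw [probReal_compl_eq_one_sub (hA i)]; linarith [h i]
      _ = Fintype.card ι * ε := by simp
  rw [probReal_compl_eq_one_sub (MeasurableSet.iInter hA)] at hunion
  linarith

end Probability

/-- **Theorem 1, equation (9): simultaneous validity of all one-step-ahead prediction
regions.** With `δ̄ := δ/T` and `p = ⌈(K+1)(1-δ̄)⌉`, the one-step-ahead predictions
`ŷ_{t+1|t} i = h t (Y i 0, ..., Y i t)` and conformal bounds `C t` (the `p`-th smallest
element of the nonconformity scores of the validation trajectories together with `+∞`)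
satisfy `P(∀ t ∈ {0,...,T-1}, ‖Y 0 (t+1) - ŷ_{t+1|t} 0‖ ≤ C t) ≥ 1 - δ`. -/
theorem conformal_onestep_coverage
    {Ω : Type*} [MeasurableSpace Ω] (μ : Measure Ω) [IsProbabilityMeasure μ]
    (d T K : ℕ) (hT : 1 ≤ T)
    (Y : Fin (K + 1) → Ω → (Fin (T + 1) → EuclideanSpace ℝ (Fin d)))
    (hmeas : ∀ i, Measurable (Y i))
    (hindep : iIndepFun Y μ)
    (hident : ∀ i, Measure.map (Y i) μ = Measure.map (Y 0) μ)
    (h : (t : ℕ) → (Fin (t + 1) → EuclideanSpace ℝ (Fin d)) → EuclideanSpace ℝ (Fin d))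
    (hmeash : ∀ t, Measurable (h t))
    (δ : ℝ) (hδ : δ ∈ Set.Ioo (0 : ℝ) 1)
    (p : ℕ) (hp : p = ⌈((K : ℝ) + 1) * (1 - δ / T)⌉₊)
    (C : ℕ → Ω → EReal)
    (hC : ∀ t, ∀ (htT : t ≤ T - 1) (ω : Ω), C t ω =
      conformalBound K
        (fun i => ((‖Y i.succ ω ⟨t + 1, by omega⟩ -
          h t (fun s => Y i.succ ω ⟨s.1, by have := s.isLt; omega⟩)‖ : ℝ) : EReal))
        p) :
    ENNReal.ofReal (1 - δ) ≤
      μ {ω | ∀ t, ∀ htT : t ≤ T - 1,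
        ((‖Y 0 ω ⟨t + 1, by omega⟩ -
          h t (fun s => Y 0 ω ⟨s.1, by have := s.isLt; omega⟩)‖ : ℝ) : EReal) ≤ C t ω} := by
  have hδT : 0 ≤ δ / T := div_nonneg hδ.1.le T.cast_nonneg
  set score : Fin T → (Fin (T + 1) → EuclideanSpace ℝ (Fin d)) → EReal := fun t v =>
    ((‖v ⟨t + 1, by omega⟩ - h t (fun s => v ⟨s.1, by omega⟩)‖ : ℝ) : EReal)
  have hscore : ∀ t, Measurable (score t) := fun t => by
    have := hmeash t
    fun_prop
  set E : Fin T → Set Ω := fun t => {ω | strictRank (fun j => score t (Y j ω)) 0 < p}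
  have hE : ∀ t, MeasurableSet (E t) := fun t =>
    (measurable_pi_lambda _ fun j => (hscore t).comp (hmeas j))
      (measurable_strictRank 0 measurableSet_Iio)
  have hpK : p ≤ K + 1 := hp ▸ Nat.ceil_le.2 (by
    push_cast; exact mul_le_of_le_one_right (by positivity) (by linarith))
  have hcov : ∀ t, 1 - δ / T ≤ μ.real (E t) := fun t => by
    have hrank := natCast_le_card_mul_measureReal_strictRank_lt
      (fun j => (hscore t).comp (hmeas j)) (hindep.comp _ fun _ => hscore t)
      (fun j => by rw [← Measure.map_map (hscore t) (hmeas j), hident]) (by simpa using hpK) 0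
    have hceil : ((K : ℝ) + 1) * (1 - δ / T) ≤ p := hp ▸ Nat.le_ceil _
    simp only [Fintype.card_fin, Nat.cast_add, Nat.cast_one] at hrank
    exact le_of_mul_le_mul_left (hceil.trans hrank) (by positivity)
  have hunion := one_sub_card_mul_le_measureReal_iInter hE hcov
  rw [Fintype.card_fin, mul_div_cancel₀ _ (Nat.cast_ne_zero.2 (by omega))] at hunion
  refine le_trans ?_ (measure_mono (s := ⋂ t, E t) fun ω hω t htT => ?_)
  · rw [← ofReal_measureReal]
    exact ENNReal.ofReal_le_ofReal hunion
  · rw [hC t htT ω]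
    exact le_conformalBound_of_strictRank_zero_lt (Set.mem_iInter.1 hω ⟨t, by omega⟩)
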